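/- Let λ : ℕ → ℝ be an injective function and let c : ℕ → ℂ satisfy ∑_l |c_l| < ∞, and set F(τ) = ∑_{l=0}^{∞} c_l · e^{−iλ_l τ} for τ ∈ ℝ. Then for every ν ∈ ℝ, lim_{T → ∞} (1/T) ∫₀^T e^{iντ} F(τ) dτ = ∑_{l : λ_l = ν} c_l. In particular the limit equals c_{l₀} if ν = λ_{l₀} for some l₀, and equals 0 if ν is not in the range of λ; hence F determines all the frequencies λ_l with c_l ≠ 0 and the corresponding coefficients. -/

import Mathlib

/-!
Multiplying by `e^{iντ}` turns the series into `∑ c_l e^{i(ν - λ_l)τ}`. The Cesàro mean of a single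
wave `e^{iωτ}` is `1` when `ω = 0` and `O(1 / (|ω| T))` otherwise. The series converges uniformly,
so it may be averaged termwise, and every averaged term is bounded by `|c_l|`; dominated
convergence for series (Tannery's theorem) then passes to the limit term by term, leaving exactly
the coefficients with `λ_l = ν`.
-/

open MeasureTheory Filter Complex Topology

section CesaroMean

variable {E : Type*} [NormedAddCommGroup E] [NormedSpace ℝ E]

noncomputable def cesaroMean (f : ℝ → E) (T : ℝ) : E :=
  T⁻¹ • ∫ τ in (0 : ℝ)..T, f τ

lemma norm_cesaroMean_le {f : ℝ → E} {C : ℝ} (hf : ∀ τ, ‖f τ‖ ≤ C) {T : ℝ} (hT : 0 < T) :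
    ‖cesaroMean f T‖ ≤ C := by
  have hint : ‖∫ τ in (0 : ℝ)..T, f τ‖ ≤ C * |T - 0| :=
    intervalIntegral.norm_integral_le_of_norm_le_const fun τ _ => hf τ
  rw [sub_zero, abs_of_pos hT] at hint
  rw [cesaroMean, norm_smul, norm_inv, Real.norm_of_nonneg hT.le, inv_mul_le_iff₀ hT]
  linarith

variable {ι : Type*} [Countable ι] {g : ι → C(ℝ, E)} {b : ι → ℝ}

lemma cesaroMean_tsum (hb : Summable b) (hgb : ∀ l τ, ‖g l τ‖ ≤ b l) (T : ℝ) :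
    cesaroMean (fun τ => ∑' l, g l τ) T = ∑' l, cesaroMean (g l) T := by
  have hsum : Summable fun l =>
      ‖(g l).restrict (⟨Set.uIcc 0 T, isCompact_uIcc⟩ : TopologicalSpace.Compacts ℝ)‖ :=
    hb.of_norm_bounded fun l => by
      rw [norm_norm]
      exact ((g l).restrict _).norm_le ((norm_nonneg _).trans (hgb l 0)) |>.2 fun τ => hgb l τ
  rw [cesaroMean, ← intervalIntegral.tsum_intervalIntegral_eq_of_summable_norm hsum,
    ← tsum_const_smul'' (T⁻¹)]
  rfl

lemma tendsto_cesaroMean_tsum [CompleteSpace E] {a : ι → E} (hb : Summable b)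
    (hgb : ∀ l τ, ‖g l τ‖ ≤ b l) (hga : ∀ l, Tendsto (cesaroMean (g l)) atTop (𝓝 (a l))) :
    Tendsto (cesaroMean fun τ => ∑' l, g l τ) atTop (𝓝 (∑' l, a l)) := by
  refine (tendsto_tsum_of_dominated_convergence hb hga ?_).congr fun T =>
    (cesaroMean_tsum hb hgb T).symm
  filter_upwards [eventually_gt_atTop 0] with T hT l
  exact norm_cesaroMean_le (hgb l) hT

end CesaroMean

lemma cesaroMean_eq_ofReal_inv_mul (f : ℝ → ℂ) (T : ℝ) :
    cesaroMean f T = (T : ℂ)⁻¹ * ∫ τ in (0 : ℝ)..T, f τ := by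
  rw [cesaroMean, ← ofReal_inv, real_smul]

lemma cesaroMean_const_mul (c : ℂ) (f : ℝ → ℂ) (T : ℝ) :
    cesaroMean (fun τ => c * f τ) T = c * cesaroMean f T := by
  rw [cesaroMean_eq_ofReal_inv_mul, cesaroMean_eq_ofReal_inv_mul,
    intervalIntegral.integral_const_mul, mul_left_comm]

lemma norm_exp_I_mul_ofReal_mul_ofReal (ω τ : ℝ) : ‖exp (I * ω * τ)‖ = 1 := by
  rw [mul_assoc, ← ofReal_mul, norm_exp_I_mul_ofReal]

lemma norm_integral_exp_mul_I_le {ω : ℝ} (hω : ω ≠ 0) (T : ℝ) :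
    ‖∫ τ in (0 : ℝ)..T, exp (I * ω * τ)‖ ≤ 2 / |ω| := by
  have hIω : I * ω ≠ 0 := mul_ne_zero I_ne_zero (ofReal_ne_zero.2 hω)
  rw [integral_exp_mul_complex hIω, norm_div, norm_mul, norm_I, norm_real, Real.norm_eq_abs,
    one_mul]
  gcongr
  calc ‖exp (I * ω * T) - exp (I * ω * (0 : ℝ))‖
      ≤ ‖exp (I * ω * T)‖ + ‖exp (I * ω * (0 : ℝ))‖ := norm_sub_le _ _
    _ = 2 := by rw [norm_exp_I_mul_ofReal_mul_ofReal, norm_exp_I_mul_ofReal_mul_ofReal]; norm_num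

lemma tendsto_cesaroMean_exp_mul_I (ω : ℝ) :
    Tendsto (cesaroMean fun τ => exp (I * ω * τ)) atTop (𝓝 (if ω = 0 then 1 else 0)) := by
  split_ifs with hω
  · refine tendsto_const_nhds.congr' ?_
    filter_upwards [eventually_gt_atTop 0] with T hT
    simp [cesaroMean, hω, hT.ne']
  · rw [tendsto_zero_iff_norm_tendsto_zero]
    refine squeeze_zero' (Eventually.of_forall fun _ => norm_nonneg _) ?_
      (by simpa using tendsto_inv_atTop_zero.mul_const (2 / |ω|))
    filter_upwards [eventually_gt_atTop 0] with T hT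
    rw [cesaroMean, norm_smul, norm_inv, Real.norm_of_nonneg hT.le]
    exact mul_le_mul_of_nonneg_left (norm_integral_exp_mul_I_le hω T) (inv_nonneg.2 hT.le)

theorem exponential_series_cesaro_recovers_coeff_general (lam : ℕ → ℝ)
    (c : ℕ → ℂ) (hc : Summable fun l => ‖c l‖)
    (F : ℝ → ℂ) (hF : ∀ τ : ℝ, F τ = ∑' l, c l * Complex.exp (-I * lam l * τ)) :
    ∀ ν : ℝ,
      Tendsto (fun T : ℝ => (T : ℂ)⁻¹ * ∫ τ in (0 : ℝ)..T,
          Complex.exp (I * ν * τ) * F τ)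
        atTop (nhds (∑' l : {l : ℕ // lam l = ν}, c l)) := by
  intro ν
  let g : ℕ → C(ℝ, ℂ) := fun l => ⟨fun τ => c l * exp (I * (ν - lam l : ℝ) * τ), by fun_prop⟩
  have h_integrand : ∀ τ : ℝ, exp (I * ν * τ) * F τ = ∑' l, g l τ := fun τ => by
    rw [hF τ, ← tsum_mul_left]
    congr 1 with l
    simp only [g, ContinuousMap.coe_mk, mul_left_comm _ (c l), ← exp_add]
    congr 2
    push_cast
    ring
  have h_bound : ∀ l τ, ‖g l τ‖ ≤ ‖c l‖ := fun l τ => by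
    rw [ContinuousMap.coe_mk, norm_mul, norm_exp_I_mul_ofReal_mul_ofReal, mul_one]
  have h_term_limit : ∀ l, Tendsto (cesaroMean (g l)) atTop (𝓝 ({l | lam l = ν}.indicator c l)) :=
    fun l => by
      convert (tendsto_cesaroMean_exp_mul_I (ν - lam l)).const_mul (c l) using 2
      · exact cesaroMean_const_mul _ _ _
      · simp [Set.indicator_apply, sub_eq_zero, eq_comm]
  rw [show ∑' l : {l // lam l = ν}, c l = _ from tsum_subtype {l | lam l = ν} c]
  simp_rw [h_integrand, ← cesaroMean_eq_ofReal_inv_mul]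
  exact tendsto_cesaroMean_tsum hc h_bound h_term_limit

/-- Cesàro averages against `e^{iντ}` recover the coefficient of frequency `ν`
in an absolutely convergent series `∑ c_l e^{-iλ_l τ}` with pairwise distinct
real frequencies. -/
theorem exponential_series_cesaro_recovers_coeff (lam : ℕ → ℝ)
    (hlam : Function.Injective lam) (c : ℕ → ℂ) (hc : Summable fun l => ‖c l‖)
    (F : ℝ → ℂ) (hF : ∀ τ : ℝ, F τ = ∑' l, c l * Complex.exp (-I * lam l * τ)) :
    ∀ ν : ℝ,
      Tendsto (fun T : ℝ => (T : ℂ)⁻¹ * ∫ τ in (0 : ℝ)..T,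
          Complex.exp (I * ν * τ) * F τ)
        atTop (nhds (∑' l : {l : ℕ // lam l = ν}, c l)) :=
  exponential_series_cesaro_recovers_coeff_general lam c hc F hF
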